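/- The function R₂ˢ(φ₂) = log₂(1 + φ₂·a) - log₂(1 + φ₂·b/(1 + (1-φ₂)·b)) with a = ρ₂|h₂|² > 0 and b = ρ_e ln(1/ε) > 0 is strictly concave on (0,1): its second derivative equals (1/ln 2)·(−a²/(1+φ₂a)² − b²/(1+(1-φ₂)b)²) < 0. -/

import Mathlib

/-!
Since `1 + x b / (1 + (1 - x) b) = (1 + b) / (1 + (1 - x) b)`, on `(0, 1)` the rate is
`logb 2 (1 + x a) + logb 2 (1 + (1 - x) b) - logb 2 (1 + b)`, a sum of logarithms of affine
functions of `x`. Each of them has second derivative `-(slope)² / (value² · ln 2)`, so the rate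
has the stated second derivative, which is negative; strict concavity follows.
-/

open Real Set Filter Topology

noncomputable def secrecyRate (a b x : ℝ) : ℝ :=
  logb 2 (1 + x * a) - logb 2 (1 + x * b / (1 + (1 - x) * b))

lemma HasDerivAt.logb_comp {u : ℝ → ℝ} {u' x : ℝ} (B : ℝ) (hu : HasDerivAt u u' x)
    (hx : u x ≠ 0) : HasDerivAt (fun y => logb B (u y)) (u' / u x / Real.log B) x := by
  simpa only [logb] using (hu.log hx).div_const (Real.log B)

lemma HasDerivAt.const_div_div_const {u : ℝ → ℝ} {u' x : ℝ} (k c : ℝ) (hu : HasDerivAt u u' x)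
    (hx : u x ≠ 0) :
    HasDerivAt (fun y => k / u y / c) (-(k * u') / u x ^ 2 / c) x := by
  have hfun : (fun y => k / u y / c) = fun y => k / c * (u y)⁻¹ := by
    funext y
    ring
  rw [hfun]
  exact ((hu.inv hx).const_mul (k / c)).congr_deriv (by ring)

section SecrecyRate

variable {a b x : ℝ}

lemma one_add_mul_pos_of_nonneg (ha : 0 ≤ a) (hx : 0 ≤ x) : 0 < 1 + x * a := by
  positivity

lemma one_add_sub_mul_pos_of_le_one (hb : 0 ≤ b) (hx : x ≤ 1) : 0 < 1 + (1 - x) * b := by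
  nlinarith

lemma hasDerivAt_one_add_mul : HasDerivAt (fun y => 1 + y * a) a x := by
  simpa using ((hasDerivAt_id x).mul_const a).const_add 1

lemma hasDerivAt_one_add_sub_mul : HasDerivAt (fun y => 1 + (1 - y) * b) (-b) x := by
  simpa using (((hasDerivAt_id x).const_sub 1).mul_const b).const_add 1

lemma secrecyRate_eq (hv : 1 + (1 - x) * b ≠ 0) (hb : 1 + b ≠ 0) :
    secrecyRate a b x = logb 2 (1 + x * a) + logb 2 (1 + (1 - x) * b) - logb 2 (1 + b) := by
  have key : 1 + x * b / (1 + (1 - x) * b) = (1 + b) / (1 + (1 - x) * b) := by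
    rw [one_add_div hv]
    congr 1
    ring
  rw [secrecyRate, key, logb_div hb hv]
  ring

lemma hasDerivAt_secrecyRate (ha : 0 ≤ a) (hb : 0 ≤ b) (hx : x ∈ Ioo 0 1) :
    HasDerivAt (secrecyRate a b)
      (a / (1 + x * a) / log 2 - b / (1 + (1 - x) * b) / log 2) x := by
  have hu := one_add_mul_pos_of_nonneg ha hx.1.le
  have hv := one_add_sub_mul_pos_of_le_one hb hx.2.le
  have hg := ((hasDerivAt_one_add_mul.logb_comp 2 hu.ne').add
    (hasDerivAt_one_add_sub_mul.logb_comp 2 hv.ne')).sub_const (logb 2 (1 + b))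
  have hfg : secrecyRate a b =ᶠ[𝓝 x]
      fun y => logb 2 (1 + y * a) + logb 2 (1 + (1 - y) * b) - logb 2 (1 + b) := by
    filter_upwards [isOpen_Ioo.mem_nhds hx] with y hy
    exact secrecyRate_eq (one_add_sub_mul_pos_of_le_one hb hy.2.le).ne' (by linarith)
  exact (hg.congr_of_eventuallyEq hfg).congr_deriv (by ring)

lemma hasDerivAt_deriv_secrecyRate (ha : 0 ≤ a) (hb : 0 ≤ b) (hx : x ∈ Ioo 0 1) :
    HasDerivAt (deriv (secrecyRate a b))
      ((1 / log 2) * (-(a ^ 2) / (1 + x * a) ^ 2 - b ^ 2 / (1 + (1 - x) * b) ^ 2)) x := by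
  have hu := one_add_mul_pos_of_nonneg ha hx.1.le
  have hv := one_add_sub_mul_pos_of_le_one hb hx.2.le
  have hg := (hasDerivAt_one_add_mul.const_div_div_const a (log 2) hu.ne').sub
    (hasDerivAt_one_add_sub_mul.const_div_div_const b (log 2) hv.ne')
  have hfg : deriv (secrecyRate a b) =ᶠ[𝓝 x]
      fun y => a / (1 + y * a) / log 2 - b / (1 + (1 - y) * b) / log 2 := by
    filter_upwards [isOpen_Ioo.mem_nhds hx] with y hy
    exact (hasDerivAt_secrecyRate ha hb hy).deriv
  exact (hg.congr_of_eventuallyEq hfg).congr_deriv (by ring)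

end SecrecyRate

/-- The asymptotic secrecy rate R₂ˢ(φ₂) is strictly concave on (0,1), with second
derivative (1/ln2)(−a²/(1+φ₂a)² − b²/(1+(1−φ₂)b)²) < 0. -/
theorem stmt10 (a b : ℝ) (ha : 0 < a) (hb : 0 < b) :
    StrictConcaveOn ℝ (Set.Ioo 0 1)
      (fun x : ℝ => Real.logb 2 (1 + x * a)
        - Real.logb 2 (1 + x * b / (1 + (1 - x) * b))) ∧
    ∀ x ∈ Set.Ioo (0:ℝ) 1,
      deriv (deriv (fun x : ℝ => Real.logb 2 (1 + x * a)
          - Real.logb 2 (1 + x * b / (1 + (1 - x) * b)))) x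
        = (1 / Real.log 2) * (-(a ^ 2) / (1 + x * a) ^ 2
            - b ^ 2 / (1 + (1 - x) * b) ^ 2) ∧
      deriv (deriv (fun x : ℝ => Real.logb 2 (1 + x * a)
          - Real.logb 2 (1 + x * b / (1 + (1 - x) * b)))) x < 0 := by
  change StrictConcaveOn ℝ (Ioo 0 1) (secrecyRate a b) ∧ ∀ x ∈ Ioo (0:ℝ) 1,
    deriv (deriv (secrecyRate a b)) x = _ ∧ deriv (deriv (secrecyRate a b)) x < 0
  have hR'' : ∀ x ∈ Ioo (0:ℝ) 1, deriv (deriv (secrecyRate a b)) x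
      = (1 / log 2) * (-(a ^ 2) / (1 + x * a) ^ 2 - b ^ 2 / (1 + (1 - x) * b) ^ 2) :=
    fun x hx => (hasDerivAt_deriv_secrecyRate ha.le hb.le hx).deriv
  have hR''_neg : ∀ x ∈ Ioo (0:ℝ) 1, deriv (deriv (secrecyRate a b)) x < 0 := by
    intro x hx
    have hu := one_add_mul_pos_of_nonneg ha.le hx.1.le
    rw [hR'' x hx, neg_div]
    have hlog : 0 < log 2 := log_pos one_lt_two
    have ha_term : 0 < a ^ 2 / (1 + x * a) ^ 2 := by positivity
    have hb_term : 0 ≤ b ^ 2 / (1 + (1 - x) * b) ^ 2 := by positivity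
    exact mul_neg_of_pos_of_neg (by positivity) (by linarith)
  have hcont : ContinuousOn (secrecyRate a b) (Ioo 0 1) := fun x hx =>
    (hasDerivAt_secrecyRate ha.le hb.le hx).continuousAt.continuousWithinAt
  exact ⟨strictConcaveOn_of_deriv2_neg' (convex_Ioo 0 1) hcont hR''_neg,
    fun x hx => ⟨hR'' x hx, hR''_neg x hx⟩⟩
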